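/- arXiv:2406.18500 — 2 statements merged into one kernel-verified Lean document; each statement's English description precedes it below -/
import Mathlib

section
/- There exists a constant N > 0 depending only on p such that for all r ∈ ℝ and all n ≥ 1: |φ_n(r)| ≤ N|r|^p, |φ_n'(r)| ≤ N|r|^{p-1}, and |φ_n''(r)| ≤ N|r|^{p-2}. -/
/-!
On `(-n, ∞)` the function `φ_n` coincides with the profile equal to `|t| ^ p` for `t ≤ n` and to
the second-order Taylor polynomial of `t ^ p` at `n` beyond; the two pieces agree to second order
at `n`, so the profile is twice differentiable with explicit piecewise derivatives. For `t ≥ n`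
each term `n ^ (p - k) * (t - n) ^ k` of the Taylor polynomial is at most `t ^ p`, which gives the
bounds with `N = (p + 1) ^ 2`, and evenness of `φ_n` carries them over to `r ≤ -n`.
-/

noncomputable def phi (p : ℝ) (n : ℕ) (r : ℝ) : ℝ :=
  if |r| < n then |r| ^ p
  else (n : ℝ) ^ (p - 2) * (p * (p - 1) / 2) * (|r| - n) ^ 2
      + p * (n : ℝ) ^ (p - 1) * (|r| - n) + (n : ℝ) ^ p

open Filter Set Topology

section Glue

variable {E : Type*} [NormedAddCommGroup E] [NormedSpace ℝ E]

theorem hasDerivAt_ite_le {f g f' g' : ℝ → E} {a : ℝ} (hf : ∀ x, HasDerivAt f (f' x) x)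
    (hg : ∀ x, HasDerivAt g (g' x) x) (hfga : f a = g a) (hfga' : f' a = g' a) (x : ℝ) :
    HasDerivAt (fun y ↦ if y ≤ a then f y else g y) (if x ≤ a then f' x else g' x) x := by
  rcases lt_trichotomy x a with hx | rfl | hx
  · rw [if_pos hx.le]
    refine (hf x).congr_of_eventuallyEq ?_
    filter_upwards [Iio_mem_nhds hx] with y hy
    simp [(mem_Iio.1 hy).le]
  · have hleft : HasDerivWithinAt (fun y ↦ if y ≤ x then f y else g y) (f' x) (Iic x) x :=
      (hf x).hasDerivWithinAt.congr (fun y hy ↦ if_pos hy) (if_pos le_rfl)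
    have hright : HasDerivWithinAt (fun y ↦ if y ≤ x then f y else g y) (f' x) (Ici x) x := by
      refine hfga' ▸ (hg x).hasDerivWithinAt.congr (fun y hy ↦ ?_) (by simp [hfga])
      rcases (mem_Ici.1 hy).eq_or_lt with rfl | hlt
      · simp [hfga]
      · simp [not_le.2 hlt]
    simpa [if_pos le_rfl] using hleft.union hright
  · rw [if_neg (not_le.2 hx)]
    refine (hg x).congr_of_eventuallyEq ?_
    filter_upwards [Ioi_mem_nhds hx] with y hy
    simp [not_le.2 (mem_Ioi.1 hy)]

end Glue

section EvenOdd

variable {𝕜 F : Type*} [NontriviallyNormedField 𝕜] [NormedAddCommGroup F] [NormedSpace 𝕜 F]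
  {f : 𝕜 → F}

theorem Function.Even.deriv (hf : f.Even) : (deriv f).Odd := fun x ↦ by
  have h := deriv_comp_neg f x
  rw [show (fun x ↦ f (-x)) = f from funext hf] at h
  rw [h, neg_neg]

theorem Function.Odd.deriv (hf : f.Odd) : (deriv f).Even := fun x ↦ by
  have h := deriv_comp_neg f x
  rw [show (fun x ↦ f (-x)) = -f from funext hf, deriv.neg, neg_inj] at h
  exact h.symm

end EvenOdd

theorem hasDerivAt_abs_rpow_mul_self {q : ℝ} (hq : 0 ≤ q) (x : ℝ) :
    HasDerivAt (fun x ↦ |x| ^ q * x) ((q + 1) * |x| ^ q) x := by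
  have hcont : Continuous fun x : ℝ ↦ |x| ^ q := continuous_abs.rpow_const fun _ ↦ Or.inr hq
  refine hasDerivAt_of_hasDerivAt_of_ne' (x := 0) (fun y hy ↦ ?_)
    (hcont.mul continuous_id).continuousAt (continuous_const.mul hcont).continuousAt x
  have hy' : |y| ≠ 0 := abs_ne_zero.2 hy
  refine (((hasDerivAt_abs hy).rpow_const (Or.inl hy')).mul (hasDerivAt_id y)).congr_deriv ?_
  rw [Real.rpow_sub_one hy', id, mul_one, Pi.mul_apply]
  have hs : (SignType.sign y : ℝ) * y = |y| := sign_mul_self y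
  field_simp
  linear_combination q * hs

noncomputable def rpowTaylor (p a t : ℝ) : ℝ :=
  a ^ (p - 2) * (p * (p - 1) / 2) * (t - a) ^ 2 + p * a ^ (p - 1) * (t - a) + a ^ p

noncomputable def powProfile (p a t : ℝ) : ℝ :=
  if t ≤ a then |t| ^ p else rpowTaylor p a t

noncomputable def powProfileDeriv (p a t : ℝ) : ℝ :=
  if t ≤ a then p * |t| ^ (p - 2) * t else a ^ (p - 2) * (p * (p - 1)) * (t - a) + p * a ^ (p - 1)

noncomputable def powProfileDeriv2 (p a t : ℝ) : ℝ :=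
  if t ≤ a then p * (p - 1) * |t| ^ (p - 2) else a ^ (p - 2) * (p * (p - 1))

theorem rpow_sub_two_mul_self {a p : ℝ} (ha : 0 ≤ a) (hp : p ≠ 1) :
    a ^ (p - 2) * a = a ^ (p - 1) := by
  rw [← Real.rpow_add_one' ha (by contrapose! hp; linarith)]
  ring_nf

theorem hasDerivAt_rpowTaylor (p a t : ℝ) :
    HasDerivAt (rpowTaylor p a) (a ^ (p - 2) * (p * (p - 1)) * (t - a) + p * a ^ (p - 1)) t := by
  have h := (hasDerivAt_id' t).sub_const a
  refine ((((h.pow 2).const_mul (a ^ (p - 2) * (p * (p - 1) / 2))).add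
    (h.const_mul (p * a ^ (p - 1)))).add_const (a ^ p)).congr_deriv ?_
  push_cast
  ring

theorem hasDerivAt_powProfile {p a : ℝ} (hp : 1 < p) (ha : 0 < a) (t : ℝ) :
    HasDerivAt (powProfile p a) (powProfileDeriv p a t) t :=
  hasDerivAt_ite_le (fun x ↦ hasDerivAt_abs_rpow x hp) (hasDerivAt_rpowTaylor p a)
    (by simp [rpowTaylor, abs_of_pos ha])
    (by rw [abs_of_pos ha, mul_assoc, rpow_sub_two_mul_self ha.le hp.ne']; ring) t

theorem hasDerivAt_powProfileDeriv {p a : ℝ} (hp : 2 ≤ p) (ha : 0 < a) (t : ℝ) :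
    HasDerivAt (powProfileDeriv p a) (powProfileDeriv2 p a t) t := by
  have hg (x : ℝ) :
      HasDerivAt (fun x ↦ p * |x| ^ (p - 2) * x) (p * (p - 1) * |x| ^ (p - 2)) x := by
    simpa only [mul_assoc, show p - 2 + 1 = p - 1 by ring] using
      (hasDerivAt_abs_rpow_mul_self (by linarith : 0 ≤ p - 2) x).const_mul p
  have hq (x : ℝ) : HasDerivAt (fun x ↦ a ^ (p - 2) * (p * (p - 1)) * (x - a) + p * a ^ (p - 1))
      (a ^ (p - 2) * (p * (p - 1))) x := by
    simpa using (((hasDerivAt_id x).sub_const a).const_mul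
      (a ^ (p - 2) * (p * (p - 1)))).add_const (p * a ^ (p - 1))
  exact hasDerivAt_ite_le hg hq
    (by rw [abs_of_pos ha, mul_assoc, rpow_sub_two_mul_self ha.le (by linarith)]; ring)
    (by rw [abs_of_pos ha]; ring) t

theorem rpow_mul_sub_pow_le_rpow {a t s u : ℝ} {k : ℕ} (ha : 0 < a) (hat : a ≤ t) (hs : 0 ≤ s)
    (hsu : s + k = u) : a ^ s * (t - a) ^ k ≤ t ^ u := by
  have ht : 0 < t := ha.trans_le hat
  calc a ^ s * (t - a) ^ k ≤ t ^ s * t ^ k := by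
        gcongr
        linarith
    _ = t ^ u := by rw [← hsu, Real.rpow_add_natCast ht.ne']

section Bounds

variable {p a : ℝ}

theorem abs_powProfile_le (hp : 2 ≤ p) (ha : 0 < a) (t : ℝ) :
    |powProfile p a t| ≤ (p + 1) ^ 2 * |t| ^ p := by
  unfold powProfile rpowTaylor
  split_ifs with hta
  · rw [abs_of_nonneg (by positivity)]
    exact le_mul_of_one_le_left (by positivity) (by nlinarith)
  · have hat : a ≤ t := (not_le.1 hta).le
    have hc : 0 ≤ p * (p - 1) / 2 := by nlinarith
    have h2 := rpow_mul_sub_pow_le_rpow ha hat (by linarith : 0 ≤ p - 2) (k := 2)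
      (by push_cast; ring)
    have h1 := rpow_mul_sub_pow_le_rpow ha hat (by linarith : 0 ≤ p - 1) (k := 1)
      (by push_cast; ring)
    have h0 : a ^ p ≤ t ^ p := Real.rpow_le_rpow ha.le hat (by linarith)
    rw [abs_of_pos (ha.trans_le hat), show a ^ (p - 2) * (p * (p - 1) / 2) * (t - a) ^ 2
      + p * a ^ (p - 1) * (t - a) + a ^ p = p * (p - 1) / 2 * (a ^ (p - 2) * (t - a) ^ 2)
      + p * (a ^ (p - 1) * (t - a) ^ 1) + a ^ p by ring, abs_of_nonneg (by positivity)]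
    calc _ ≤ p * (p - 1) / 2 * t ^ p + p * t ^ p + t ^ p := by gcongr
      _ = (p * (p - 1) / 2 + p + 1) * t ^ p := by ring
      _ ≤ (p + 1) ^ 2 * t ^ p :=
        mul_le_mul_of_nonneg_right (by nlinarith) (Real.rpow_nonneg (ha.le.trans hat) p)

theorem abs_powProfileDeriv_le (hp : 2 ≤ p) (ha : 0 < a) (t : ℝ) :
    |powProfileDeriv p a t| ≤ (p + 1) ^ 2 * |t| ^ (p - 1) := by
  unfold powProfileDeriv
  split_ifs with hta
  · rw [abs_mul, abs_mul, abs_of_nonneg (by linarith : 0 ≤ p),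
      abs_of_nonneg (Real.rpow_nonneg (abs_nonneg t) _), mul_assoc,
      rpow_sub_two_mul_self (abs_nonneg t) (by linarith)]
    exact mul_le_mul_of_nonneg_right (by nlinarith) (by positivity)
  · have hat : a ≤ t := (not_le.1 hta).le
    have hc : 0 ≤ p * (p - 1) := by nlinarith
    have h1 := rpow_mul_sub_pow_le_rpow ha hat (by linarith : 0 ≤ p - 2) (k := 1)
      (u := p - 1) (by push_cast; ring)
    have h0 : a ^ (p - 1) ≤ t ^ (p - 1) := Real.rpow_le_rpow ha.le hat (by linarith)
    rw [abs_of_pos (ha.trans_le hat), show a ^ (p - 2) * (p * (p - 1)) * (t - a) + p * a ^ (p - 1)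
      = p * (p - 1) * (a ^ (p - 2) * (t - a) ^ 1) + p * a ^ (p - 1) by ring,
      abs_of_nonneg (by positivity)]
    calc _ ≤ p * (p - 1) * t ^ (p - 1) + p * t ^ (p - 1) := by gcongr
      _ = p ^ 2 * t ^ (p - 1) := by ring
      _ ≤ (p + 1) ^ 2 * t ^ (p - 1) :=
        mul_le_mul_of_nonneg_right (by nlinarith) (Real.rpow_nonneg (ha.le.trans hat) _)

theorem abs_powProfileDeriv2_le (hp : 2 ≤ p) (ha : 0 < a) (t : ℝ) :
    |powProfileDeriv2 p a t| ≤ (p + 1) ^ 2 * |t| ^ (p - 2) := by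
  have hc : 0 ≤ p * (p - 1) := by nlinarith
  have hcN : p * (p - 1) ≤ (p + 1) ^ 2 := by nlinarith
  unfold powProfileDeriv2
  split_ifs with hta
  · rw [abs_of_nonneg (by positivity)]
    exact mul_le_mul_of_nonneg_right hcN (by positivity)
  · have hat : a ≤ t := (not_le.1 hta).le
    rw [abs_of_nonneg (by positivity), abs_of_pos (ha.trans_le hat), mul_comm]
    exact mul_le_mul hcN (Real.rpow_le_rpow ha.le hat (by linarith)) (by positivity)
      (by positivity)

end Bounds

theorem phi_even (p : ℝ) (n : ℕ) : (phi p n).Even := fun r ↦ by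
  simp only [phi, abs_neg]

theorem phi_eq_powProfile {p x : ℝ} {n : ℕ} (hx : -(n : ℝ) < x) :
    phi p n x = powProfile p n x := by
  have hn : (0 : ℝ) ≤ n := n.cast_nonneg
  rcases lt_trichotomy x n with hxn | rfl | hxn
  · rw [phi, powProfile, if_pos (abs_lt.2 ⟨hx, hxn⟩), if_pos hxn.le]
  · simp [phi, powProfile]
  · rw [phi, powProfile, abs_of_pos (hn.trans_lt hxn), if_neg (not_lt.2 hxn.le),
      if_neg (not_le.2 hxn)]
    rfl

theorem stmt1 (p : ℝ) (hp : 2 ≤ p) :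
    ∃ N : ℝ, 0 < N ∧ ∀ n : ℕ, 1 ≤ n → ∀ r : ℝ,
      |phi p n r| ≤ N * |r| ^ p ∧
      |deriv (phi p n) r| ≤ N * |r| ^ (p - 1) ∧
      |deriv (deriv (phi p n)) r| ≤ N * |r| ^ (p - 2) := by
  refine ⟨(p + 1) ^ 2, by positivity, fun n hn r ↦ ?_⟩
  have hn0 : (0 : ℝ) < n := by exact_mod_cast hn
  have hderiv : deriv (powProfile p n) = powProfileDeriv p n :=
    funext fun t ↦ (hasDerivAt_powProfile (by linarith) hn0 t).deriv
  have hderiv2 : deriv (powProfileDeriv p n) = powProfileDeriv2 p n :=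
    funext fun t ↦ (hasDerivAt_powProfileDeriv hp hn0 t).deriv
  have key (x : ℝ) (hx : -(n : ℝ) < x) :
      |phi p n x| ≤ (p + 1) ^ 2 * |x| ^ p ∧
      |deriv (phi p n) x| ≤ (p + 1) ^ 2 * |x| ^ (p - 1) ∧
      |deriv (deriv (phi p n)) x| ≤ (p + 1) ^ 2 * |x| ^ (p - 2) := by
    have hloc : phi p n =ᶠ[𝓝 x] powProfile p n :=
      eventually_of_mem (Ioi_mem_nhds hx) fun y hy ↦ phi_eq_powProfile hy
    rw [hloc.eq_of_nhds, hloc.deriv_eq, hloc.deriv.deriv_eq, hderiv, hderiv2]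
    exact ⟨abs_powProfile_le hp hn0 x, abs_powProfileDeriv_le hp hn0 x,
      abs_powProfileDeriv2_le hp hn0 x⟩
  have heven := phi_even p n
  rcases lt_or_ge (-(n : ℝ)) r with hr | hr
  · exact key r hr
  · simpa only [heven r, heven.deriv r, heven.deriv.deriv r, abs_neg] using key (-r) (by linarith)
end

section
/- For all r ∈ ℝ and n ≥ 1, one has |r·φ_n'(r)| ≤ p·φ_n(r). -/
/-!
For `r ≥ 0` the function `phi p n` is `r ^ p` on `[0, n)` and, beyond `n`, the second-order Taylor
polynomial `q` of `x ↦ x ^ p` at `n`; the two pieces are glued in a `C¹` way at `n`. On `[0, n]` one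
has `r φ'(r) = p r ^ p` exactly, and beyond `n`, writing `t = r - n`,
`p q(r) - r q'(r) = n ^ (p - 2) p (p - 1) (p - 2) t ^ 2 / 2 ≥ 0`, while `q' ≥ 0` there.
Negative `r` reduce to positive ones because `phi p n` is even.
-/

open Set Topology

noncomputable def rpowTaylorQuad (p a x : ℝ) : ℝ :=
  a ^ (p - 2) * (p * (p - 1) / 2) * (x - a) ^ 2 + p * a ^ (p - 1) * (x - a) + a ^ p

lemma rpowTaylorQuad_self (p a : ℝ) : rpowTaylorQuad p a a = a ^ p := by
  simp [rpowTaylorQuad]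

lemma hasDerivAt_rpowTaylorQuad (p a x : ℝ) :
    HasDerivAt (rpowTaylorQuad p a) (a ^ (p - 2) * (p * (p - 1)) * (x - a) + p * a ^ (p - 1)) x := by
  have hsub : HasDerivAt (fun x : ℝ => x - a) 1 x := (hasDerivAt_id x).sub_const a
  refine ((((hsub.pow 2).const_mul (a ^ (p - 2) * (p * (p - 1) / 2))).add
    (hsub.const_mul (p * a ^ (p - 1)))).add_const (a ^ p)).congr_deriv ?_
  ring

lemma abs_mul_deriv_rpowTaylorQuad_le {p a x : ℝ} (hp : 2 ≤ p) (ha : 0 ≤ a) (hax : a ≤ x) :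
    |x * (a ^ (p - 2) * (p * (p - 1)) * (x - a) + p * a ^ (p - 1))| ≤ p * rpowTaylorQuad p a x := by
  set A := a ^ (p - 2)
  have hA : 0 ≤ A := Real.rpow_nonneg ha _
  have h₁ : a ^ (p - 1) = A * a := by
    rw [← Real.rpow_add_one' ha (by linarith)]; ring_nf
  have h₂ : a ^ p = A * a ^ 2 := by
    rw [← Real.rpow_natCast, ← Real.rpow_add' ha (by norm_num; linarith)]; norm_num
  have hp₀ : 0 ≤ p := by linarith
  have hp₁ : 0 ≤ p - 1 := by linarith
  have hp₂ : 0 ≤ p - 2 := by linarith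
  have hxa : 0 ≤ x - a := sub_nonneg.2 hax
  have hderiv : 0 ≤ A * (p * (p - 1)) * (x - a) + p * (A * a) := by
    have := mul_nonneg hp₀ hp₁
    positivity
  have key : p * (A * (p * (p - 1) / 2) * (x - a) ^ 2 + p * (A * a) * (x - a) + A * a ^ 2)
      - x * (A * (p * (p - 1)) * (x - a) + p * (A * a))
      = A * (p * (p - 1) * (p - 2)) / 2 * (x - a) ^ 2 := by ring
  rw [rpowTaylorQuad, h₁, h₂, abs_of_nonneg (mul_nonneg (ha.trans hax) hderiv), ← sub_nonneg, key]
  have := mul_nonneg (mul_nonneg hp₀ hp₁) hp₂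
  positivity

lemma phi_neg (p : ℝ) (n : ℕ) (r : ℝ) : phi p n (-r) = phi p n r := by
  simp only [phi, abs_neg]

lemma deriv_phi_neg (p : ℝ) (n : ℕ) (r : ℝ) : deriv (phi p n) (-r) = -deriv (phi p n) r := by
  have heven : (fun x => phi p n (-x)) = phi p n := funext (phi_neg p n)
  rw [← heven, deriv_comp_neg, neg_neg, heven]

lemma phi_zero {p : ℝ} (hp : p ≠ 0) (n : ℕ) : phi p n 0 = 0 := by
  rcases n.eq_zero_or_pos with rfl | hn
  · simp [phi, Real.zero_rpow hp]
  · simp [phi, hn, Real.zero_rpow hp]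

lemma phi_of_nonneg {p : ℝ} {n : ℕ} {x : ℝ} (hx : 0 ≤ x) :
    phi p n x = if x < n then x ^ p else rpowTaylorQuad p n x := by
  simp only [phi, rpowTaylorQuad, abs_of_nonneg hx]

lemma phi_eqOn_rpow (p : ℝ) (n : ℕ) : EqOn (phi p n) (fun x => x ^ p) (Icc 0 n) := by
  rintro x ⟨hx₀, hxn⟩
  rcases hxn.lt_or_eq with hxn | rfl
  · simp [phi_of_nonneg hx₀, hxn]
  · simp [phi_of_nonneg hx₀, rpowTaylorQuad_self]

lemma phi_eqOn_rpowTaylorQuad (p : ℝ) (n : ℕ) : EqOn (phi p n) (rpowTaylorQuad p n) (Ici n) := by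
  intro x hx
  simp [phi_of_nonneg ((Nat.cast_nonneg n).trans hx), not_lt.2 (show (n : ℝ) ≤ x from hx)]

lemma hasDerivAt_phi_natCast (p : ℝ) {n : ℕ} (hn : 0 < n) :
    HasDerivAt (phi p n) (p * (n : ℝ) ^ (p - 1)) n := by
  have hn' : (0 : ℝ) < n := Nat.cast_pos.2 hn
  have hleft : HasDerivWithinAt (phi p n) (p * (n : ℝ) ^ (p - 1)) (Icc 0 n) n :=
    (Real.hasDerivAt_rpow_const (Or.inl hn'.ne')).hasDerivWithinAt.congr (phi_eqOn_rpow p n)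
      (phi_eqOn_rpow p n ⟨hn'.le, le_rfl⟩)
  have hright : HasDerivWithinAt (phi p n) (p * (n : ℝ) ^ (p - 1)) (Ici n) n := by
    refine ((hasDerivAt_rpowTaylorQuad p n n).hasDerivWithinAt.congr (phi_eqOn_rpowTaylorQuad p n)
      (phi_eqOn_rpowTaylorQuad p n self_mem_Ici)).congr_deriv ?_
    simp
  have hU : Icc 0 (n : ℝ) ∪ Ici n ∈ 𝓝 (n : ℝ) := by
    rw [Icc_union_Ici_eq_Ici hn'.le]
    exact Ici_mem_nhds hn'
  exact (hleft.union hright).hasDerivAt hU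

lemma hasDerivAt_phi_of_pos_of_le {p r : ℝ} {n : ℕ} (hr : 0 < r) (hrn : r ≤ n) :
    HasDerivAt (phi p n) (p * r ^ (p - 1)) r := by
  rcases hrn.lt_or_eq with hrn | rfl
  · refine (Real.hasDerivAt_rpow_const (Or.inl hr.ne')).congr_of_eventuallyEq ?_
    exact (phi_eqOn_rpow p n).eventuallyEq_of_mem (Icc_mem_nhds hr hrn)
  · exact hasDerivAt_phi_natCast p (Nat.cast_pos.1 hr)

lemma hasDerivAt_phi_of_lt {p r : ℝ} {n : ℕ} (hrn : n < r) :
    HasDerivAt (phi p n) ((n : ℝ) ^ (p - 2) * (p * (p - 1)) * (r - n) + p * (n : ℝ) ^ (p - 1)) r :=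
  (hasDerivAt_rpowTaylorQuad p n r).congr_of_eventuallyEq
    ((phi_eqOn_rpowTaylorQuad p n).eventuallyEq_of_mem (Ici_mem_nhds hrn))

lemma abs_mul_deriv_phi_le_of_pos {p r : ℝ} (hp : 2 ≤ p) (n : ℕ) (hr : 0 < r) :
    |r * deriv (phi p n) r| ≤ p * phi p n r := by
  rcases le_or_gt r n with hrn | hrn
  · have hmul : r * (p * r ^ (p - 1)) = p * r ^ p := by
      rw [Real.rpow_sub_one hr.ne']; field_simp
    rw [(hasDerivAt_phi_of_pos_of_le hr hrn).deriv, hmul, phi_eqOn_rpow p n ⟨hr.le, hrn⟩,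
      abs_of_nonneg (by positivity)]
  · rw [(hasDerivAt_phi_of_lt hrn).deriv, phi_eqOn_rpowTaylorQuad p n hrn.le]
    exact abs_mul_deriv_rpowTaylorQuad_le hp (Nat.cast_nonneg n) hrn.le

theorem stmt3_general (p : ℝ) (hp : 2 ≤ p) (n : ℕ) (r : ℝ) :
    |r * deriv (phi p n) r| ≤ p * phi p n r := by
  rcases lt_trichotomy r 0 with hr | rfl | hr
  · have h := abs_mul_deriv_phi_le_of_pos hp n (neg_pos.2 hr)
    rwa [deriv_phi_neg, phi_neg, neg_mul_neg] at h
  · simp [phi_zero (by linarith : p ≠ 0)]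
  · exact abs_mul_deriv_phi_le_of_pos hp n hr

theorem stmt3 (p : ℝ) (hp : 2 ≤ p) (n : ℕ) (hn : 1 ≤ n) (r : ℝ) :
    |r * deriv (phi p n) r| ≤ p * phi p n r :=
  stmt3_general p hp n r
end
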